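/- Let K ≥ 2, α ∈ (0,1), γ ≥ 6, L ∈ ℝ^K, h ∈ [−1,1], and let x'_1 > 0 be a real number. Fix ω ∈ (1,2] and suppose β ≥ 4K/((ω−1)(1−ω^{α−1})). Suppose x minimizes F_{L,β,γ} and y minimizes F_{L+(h/x'_1)e_1, β', γ}, where 2·x'_1 ≥ x_1 and 0 ≤ β' − β ≤ (1/2)·γ·x_*^{−α}. Then y_i ≤ 6·x_i for all i ∈ [K]. -/

import Mathlib

open Finset

/-- The hybrid FTRL objective
`F_{L,β,γ}(p) = ⟨L,p⟩ + (β/α)(1 − Σᵢ pᵢ^α) − γ Σᵢ ln pᵢ`. -/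
noncomputable def hybridF {K : ℕ} (α β γ : ℝ) (L p : Fin K → ℝ) : ℝ :=
  (∑ i, L i * p i) + (β / α) * (1 - ∑ i, p i ^ α) - γ * ∑ i, Real.log (p i)

/-- The positive probability simplex. -/
def posSimplex {K : ℕ} (p : Fin K → ℝ) : Prop :=
  (∀ i, 0 < p i) ∧ ∑ i, p i = 1

/-- `x` minimizes `F_{L,β,γ}` over the positive simplex. -/
def MinimizesF {K : ℕ} (α β γ : ℝ) (L x : Fin K → ℝ) : Prop :=
  posSimplex x ∧ ∀ p : Fin K → ℝ, posSimplex p → hybridF α β γ L x ≤ hybridF α β γ L p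

/-- `x_* = min(maxᵢ xᵢ, 1 − maxᵢ xᵢ)`. -/
noncomputable def vecStar {K : ℕ} (x : Fin K → ℝ) : ℝ :=
  min (⨆ i, x i) (1 - ⨆ i, x i)

lemma kkt_aux {K : ℕ} {α β γ : ℝ} (hα0 : 0 < α) (L x : Fin K → ℝ)
    (hx : MinimizesF α β γ L x) (i j : Fin K) :
    L i - β * x i ^ (α-1) - γ / x i = L j - β * x j ^ (α-1) - γ / x j := by
  by_cases hij : i = j
  · simp [hij]
  have hxi := hx.1.1 i
  have hxj := hx.1.1 j
  set c : Fin K → ℝ := fun k => (if k = i then (1:ℝ) else 0) - (if k = j then 1 else 0)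
    with hc
  have hci : c i = 1 := by simp [hc, hij]
  have hcj : c j = -1 := by simp [hc, Ne.symm hij]
  have hcabs : ∀ k, |c k| ≤ 1 := by
    intro k
    simp only [hc]
    split_ifs <;> norm_num
  have hsumc : ∑ k, c k = 0 := by
    simp [hc, Finset.sum_sub_distrib]
  set ε := min (x i) (x j) with hε
  have hεpos : 0 < ε := lt_min hxi hxj
  have hmem : ∀ t ∈ Metric.ball (0:ℝ) ε, posSimplex (fun k => x k + t * c k) := by
    intro t ht
    have ht' : |t| < ε := by simpa [Real.dist_eq] using ht
    constructor
    · intro k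
      by_cases hk : c k = 0
      · simpa [hk] using hx.1.1 k
      · have hkx : ε ≤ x k := by
          have : k = i ∨ k = j := by
            by_contra hcon
            push_neg at hcon
            simp [hc, hcon.1, hcon.2] at hk
          rcases this with rfl | rfl
          · exact min_le_left _ _
          · exact min_le_right _ _
        have : -|t| ≤ t * c k := by
          calc -|t| ≤ -|t * c k| := by
                rw [neg_le_neg_iff, abs_mul]
                calc |t| * |c k| ≤ |t| * 1 := by
                      exact mul_le_mul_of_nonneg_left (hcabs k) (abs_nonneg t)
                  _ = |t| := mul_one _
            _ ≤ t * c k := neg_abs_le _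
        show (0:ℝ) < x k + t * c k
        linarith
    · have : ∑ k, (x k + t * c k) = (∑ k, x k) + t * ∑ k, c k := by
        rw [Finset.sum_add_distrib, Finset.mul_sum]
      rw [this, hsumc, hx.1.2]; ring
  have hlocal : IsLocalMin (fun t => hybridF α β γ L (fun k => x k + t * c k)) 0 := by
    filter_upwards [Metric.ball_mem_nhds (0:ℝ) hεpos] with t ht
    have h0 : (fun k => x k + (0:ℝ) * c k) = x := by funext k; ring
    calc (fun t => hybridF α β γ L (fun k => x k + t * c k)) 0
        = hybridF α β γ L x := by simp only [h0]
      _ ≤ hybridF α β γ L (fun k => x k + t * c k) := hx.2 _ (hmem t ht)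
  have hD : HasDerivAt (fun t => hybridF α β γ L (fun k => x k + t * c k))
      ((∑ k, L k * c k) + (β/α) * (0 - ∑ k, α * x k ^ (α-1) * c k)
        - γ * ∑ k, (x k)⁻¹ * c k) 0 := by
    have base : ∀ k : Fin K, HasDerivAt (fun t : ℝ => x k + t * c k) (c k) 0 := by
      intro k
      simpa using ((hasDerivAt_id (0:ℝ)).mul_const (c k)).const_add (x k)
    have h1 : HasDerivAt (fun t : ℝ => ∑ k, L k * (x k + t * c k)) (∑ k, L k * c k) 0 :=
      HasDerivAt.fun_sum (fun k _ => ((base k).const_mul (L k)))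
    have h2 : HasDerivAt (fun t : ℝ => ∑ k, (x k + t * c k) ^ α)
        (∑ k, α * x k ^ (α-1) * c k) 0 := by
      refine HasDerivAt.fun_sum (fun k _ => ?_)
      have h := (base k).rpow_const (p := α) (by left; simpa using (hx.1.1 k).ne')
      have e : c k * α * (x k + 0 * c k) ^ (α - 1) = α * x k ^ (α-1) * c k := by
        norm_num; ring
      rw [e] at h; exact h
    have h3 : HasDerivAt (fun t : ℝ => ∑ k, Real.log (x k + t * c k))
        (∑ k, (x k)⁻¹ * c k) 0 := by
      refine HasDerivAt.fun_sum (fun k _ => ?_)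
      have := (base k).log (by simpa using (hx.1.1 k).ne')
      simpa [div_eq_inv_mul] using this
    exact (h1.add (((hasDerivAt_const (0:ℝ) (1:ℝ)).sub h2).const_mul (β/α))).sub
      (h3.const_mul γ)
  have hzero := hlocal.hasDerivAt_eq_zero hD
  have hs : ∀ g : Fin K → ℝ, ∑ k, g k * c k = g i - g j := by
    intro g
    simp [hc, mul_sub, Finset.sum_sub_distrib, mul_ite, mul_one, mul_zero,
      Finset.sum_ite_eq']
  rw [hs L, hs (fun k => α * x k ^ (α-1)), hs (fun k => (x k)⁻¹)] at hzero
  have e1 : (β/α) * (0 - (α * x i ^ (α-1) - α * x j ^ (α-1)))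
      = β * x j ^ (α-1) - β * x i ^ (α-1) := by
    field_simp; ring
  rw [e1] at hzero
  rw [div_eq_mul_inv γ (x i), div_eq_mul_inv γ (x j)]
  linarith

lemma le_vecStar_aux {K : ℕ} (hK : 2 ≤ K) (x : Fin K → ℝ) (hx : posSimplex x)
    (i : Fin K) (hhalf : x i ≤ 1/2) : x i ≤ vecStar x := by
  have : Nonempty (Fin K) := ⟨⟨0, by omega⟩⟩
  obtain ⟨i0, hi0⟩ := Finite.exists_max x
  have hM : (⨆ j, x j) = x i0 :=
    le_antisymm (ciSup_le hi0) (le_ciSup (Set.Finite.bddAbove (Set.finite_range x)) i0)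
  have h1 : x i ≤ x i0 := hi0 i
  have h2 : x i ≤ 1 - x i0 := by
    by_cases hii : i = i0
    · subst hii; linarith
    · have : x i + x i0 ≤ 1 := by
        have e : x i + x i0 = ∑ j ∈ ({i, i0} : Finset (Fin K)), x j :=
          (Finset.sum_pair hii).symm
        rw [e, ← hx.2]
        exact Finset.sum_le_sum_of_subset_of_nonneg (Finset.subset_univ _)
          (fun j _ _ => (hx.1 j).le)
      linarith
    
  rw [vecStar, hM]
  exact le_min h1 h2

/-- **Combined stability (Corollary 1).**
Fix `ω ∈ (1,2]` and suppose `β ≥ 4K/((ω−1)(1−ω^{α−1}))`, `γ ≥ 6`, `h ∈ [−1,1]`,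
`x'₁ > 0`, `2x'₁ ≥ x₁` and `0 ≤ β' − β ≤ (1/2)·γ·x_*^{−α}`.  If `x` minimizes
`F_{L,β,γ}` and `y` minimizes `F_{L+(h/x'₁)e₁,β',γ}`, then `yᵢ ≤ 6xᵢ` for all `i`. -/
theorem stmt4 {K : ℕ} (hK : 2 ≤ K) {α β β' γ h x1' ω : ℝ}
    (hα : α ∈ Set.Ioo (0:ℝ) 1) (hγ : 6 ≤ γ)
    (hh : h ∈ Set.Icc (-1:ℝ) 1) (hx1' : 0 < x1')
    (hω : ω ∈ Set.Ioc (1:ℝ) 2)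
    (hβ : 4 * K / ((ω - 1) * (1 - ω ^ (α - 1))) ≤ β)
    (L x y : Fin K → ℝ)
    (hx : MinimizesF α β γ L x)
    (hy : MinimizesF α β' γ
      (fun i => L i + (h / x1') * (if (i : ℕ) = 0 then 1 else 0)) y)
    (h2 : 2 * x1' ≥ x ⟨0, by omega⟩)
    (hgap : 0 ≤ β' - β ∧ β' - β ≤ (1 / 2) * γ * (vecStar x) ^ (-α)) :
    ∀ i, y i ≤ 6 * x i := by
  obtain ⟨hα0, hα1⟩ := hα
  set i0 : Fin K := ⟨0, by omega⟩ with hi0def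
  have hxpos := hx.1.1
  have hypos := hy.1.1
  have hxsum := hx.1.2
  have hysum := hy.1.2
  have hγ0 : (0:ℝ) < γ := by linarith
  have hβ0 : 0 ≤ β := by
    refine le_trans ?_ hβ
    have hω1 : (1:ℝ) < ω := hω.1
    have hlt : ω ^ (α - 1) < 1 := Real.rpow_lt_one_of_one_lt_of_neg hω1 (by linarith)
    have hden : 0 < (ω - 1) * (1 - ω ^ (α - 1)) := mul_pos (by linarith) (by linarith)
    positivity
  have hββ' : β ≤ β' := by linarith [hgap.1]
  have hval0 : ∀ j : Fin K, (j:ℕ) = 0 → j = i0 := fun j hj => Fin.val_injective hj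
  have h2' : x i0 ≤ 2 * x1' := h2
  have hA := kkt_aux hα0 L x hx
  have hB := kkt_aux hα0 _ y hy
  set G : Fin K → ℝ := fun i => (β' * y i ^ (α-1) + γ / y i)
      - (β * x i ^ (α-1) + γ / x i) with hGdef
  clear_value G
  have hG : ∀ i j : Fin K, G i - G j
      = (if (i:ℕ) = 0 then h/x1' else 0) - (if (j:ℕ) = 0 then h/x1' else 0) := by
    intro i j
    have hAij := hA i j
    have hBij := hB i j
    simp only [hGdef]
    by_cases hi : (i:ℕ) = 0 <;> by_cases hj : (j:ℕ) = 0 <;>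
      simp only [hi, hj, if_true, if_false, if_pos, if_neg, not_false_iff,
        mul_one, mul_zero, add_zero, ite_true, ite_false] at hBij ⊢ <;>
      linarith
  have hGnonneg : ∀ j, y j ≤ x j → 0 ≤ G j := by
    intro j hyx
    have ha1 : x j ^ (α-1) ≤ y j ^ (α-1) :=
      Real.rpow_le_rpow_of_nonpos (hypos j) hyx (by linarith)
    have ha2 : β * x j ^ (α-1) ≤ β' * y j ^ (α-1) :=
      mul_le_mul hββ' ha1 (Real.rpow_nonneg (hxpos j).le _) (le_trans hβ0 hββ')
    have ha3 : γ / x j ≤ γ / y j := by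
      rw [div_le_div_iff₀ (hxpos j) (hypos j)]
      exact mul_le_mul_of_nonneg_left hyx hγ0.le
    simp only [hGdef]
    linarith
  intro i
  by_contra hcon
  push_neg at hcon
  have hxipos := hxpos i
  have hyile : y i ≤ 1 := by
    rw [← hysum]; exact Finset.single_le_sum (fun j _ => (hypos j).le) (mem_univ i)
  have hxismall : x i < 1/6 := by linarith
  have hxstar : x i ≤ vecStar x := le_vecStar_aux hK x hx.1 i (by linarith)
  have hanti : y i ^ (α-1) ≤ x i ^ (α-1) :=
    Real.rpow_le_rpow_of_nonpos hxipos (by linarith) (by linarith)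
  have hstar_anti : vecStar x ^ (-α) ≤ x i ^ (-α) :=
    Real.rpow_le_rpow_of_nonpos hxipos hxstar (by linarith)
  have hxinv : x i ^ (-α) * x i ^ (α-1) = (x i)⁻¹ := by
    rw [← Real.rpow_add hxipos, show -α + (α-1) = (-1:ℝ) by ring, Real.rpow_neg_one]
  have hvpos : 0 < vecStar x := lt_of_lt_of_le hxipos hxstar
  have hgap2 : (β' - β) * y i ^ (α-1) ≤ (γ/2) * (x i)⁻¹ := by
    calc (β' - β) * y i ^ (α-1)
        ≤ ((1/2) * γ * vecStar x ^ (-α)) * (x i ^ (α-1)) :=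
          mul_le_mul hgap.2 hanti (Real.rpow_nonneg (hypos i).le _) (by positivity)
      _ ≤ ((1/2) * γ * x i ^ (-α)) * (x i ^ (α-1)) := by
          have h1 : (1/2) * γ * vecStar x ^ (-α) ≤ (1/2) * γ * x i ^ (-α) :=
            mul_le_mul_of_nonneg_left hstar_anti (by positivity)
          exact mul_le_mul_of_nonneg_right h1 (Real.rpow_nonneg hxipos.le _)
      _ = (γ/2) * (x i)⁻¹ := by rw [mul_assoc, hxinv]; ring
  have htail : γ / y i < γ / (6 * x i) := by
    rw [div_lt_div_iff₀ (hypos i) (by positivity)]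
    exact mul_lt_mul_of_pos_left hcon hγ0
  have hxi0pos := hxpos i0
  have hΔ0 : (1:ℝ)/x1' ≤ 2 / x i0 := by
    rw [div_le_div_iff₀ hx1' hxi0pos]; linarith
  have hGi : -(2 / x i) ≤ G i := by
    by_cases hcase : ∃ j : Fin K, (j:ℕ) ≠ 0 ∧ y j ≤ x j
    · obtain ⟨j, hj0, hjle⟩ := hcase
      have hGj := hGnonneg j hjle
      have hgij := hG i j
      rw [if_neg hj0] at hgij
      by_cases hii : (i:ℕ) = 0
      · rw [if_pos hii] at hgij
        have hieq : i = i0 := hval0 i hii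
        have hneg : (-1)/x1' ≤ h/x1' := by
          rw [div_le_div_iff₀ hx1' hx1']
          exact mul_le_mul_of_nonneg_right hh.1 hx1'.le
        have e1 : (-1)/x1' = -((1:ℝ)/x1') := by ring
        rw [hieq]
        rw [hieq] at hgij
        linarith
      · rw [if_neg hii] at hgij
        have : (0:ℝ) ≤ 2 / x i := by positivity
        linarith
    · push_neg at hcase
      have hy0x0 : y i0 ≤ x i0 := by
        by_contra hq
        push_neg at hq
        have hall : ∀ j : Fin K, x j < y j := by
          intro j
          by_cases hj : (j:ℕ) = 0
          · rw [hval0 j hj]; exact hq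
          · exact hcase j hj
        have : ∑ j, x j < ∑ j, y j :=
          Finset.sum_lt_sum_of_nonempty ⟨i0, mem_univ i0⟩ (fun j _ => hall j)
        rw [hxsum, hysum] at this
        exact lt_irrefl 1 this
      have hii : (i:ℕ) ≠ 0 := by
        intro hq
        rw [hval0 i hq] at hcon
        have := hxpos i0
        linarith
      have hmem_i : i ∈ univ.erase i0 :=
        Finset.mem_erase.mpr ⟨fun hq => hii (by rw [hq]), mem_univ i⟩
      have hs1 : y i - x i ≤ ∑ j ∈ univ.erase i0, (y j - x j) := by
        refine Finset.single_le_sum (f := fun j => y j - x j) (fun j hj => ?_) hmem_i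
        have hj0 : (j:ℕ) ≠ 0 := fun hq => (Finset.mem_erase.mp hj).1 (hval0 j hq)
        show (0:ℝ) ≤ y j - x j
        linarith [hcase j hj0]
      have hs2 : (y i0 - x i0) + ∑ j ∈ univ.erase i0, (y j - x j)
          = ∑ j, (y j - x j) :=
        Finset.add_sum_erase univ (fun j => y j - x j) (mem_univ i0)
      have hs3 : ∑ j, (y j - x j) = 0 := by
        rw [Finset.sum_sub_distrib, hysum, hxsum]; ring
      have hsum0 : y i - x i ≤ x i0 - y i0 := by linarith
      have hx05 : 5 * x i < x i0 := by linarith [hypos i0]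
      have hGi0 := hGnonneg i0 hy0x0
      have hgij := hG i i0
      rw [if_neg hii, if_pos (show ((i0 : Fin K):ℕ) = 0 from rfl)] at hgij
      have hH : h / x1' ≤ 1 / x1' := by
        rw [div_le_div_iff₀ hx1' hx1']
        exact mul_le_mul_of_nonneg_right hh.2 hx1'.le
      have hfrac : 2 / x i0 ≤ 2 / (5 * x i) := by
        rw [div_le_div_iff₀ hxi0pos (by positivity)]
        linarith
      have hfrac2 : 2 / (5 * x i) ≤ 2 / x i := by
        rw [div_le_div_iff₀ (by positivity) hxipos]
        linarith
      linarith
  -- final contradiction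
  have hβyi : β * y i ^ (α-1) ≤ β * x i ^ (α-1) :=
    mul_le_mul_of_nonneg_left hanti hβ0
  have hxinvpos : 0 < (x i)⁻¹ := by positivity
  have h6I : 6 * (x i)⁻¹ ≤ γ * (x i)⁻¹ :=
    mul_le_mul_of_nonneg_right hγ hxinvpos.le
  have e6 : γ / (6 * x i) = (γ/6) * (x i)⁻¹ := by
    rw [div_mul_eq_div_div_swap]; ring
  have eX : γ / x i = γ * (x i)⁻¹ := div_eq_mul_inv γ (x i)
  have e2 : (2:ℝ) / x i = 2 * (x i)⁻¹ := div_eq_mul_inv 2 (x i)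
  simp only [hGdef] at hGi
  rw [e6] at htail
  rw [eX, e2] at hGi
  nlinarith [htail, hgap2, hβyi, hGi, h6I]
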